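/- arXiv:2004.13101 — 7 statements merged into one kernel-verified Lean document; each statement's English description precedes it below -/
import Mathlib

section
/- Let q be an odd prime power. The number of pairs (t, (S,R,P)) with t,S,R,P ∈ F_q such that t³ − St² + Rt − P = 0 and (S−P)² + 8P − 4R is a nonzero square in F_q equals (q²−q)(q+1)/2. -/
/-!
Factor the cubic as `(x - t)(x² - Bx + C)` and put `v = B - t - Ct`; then `(S - P)² + 8P - 4R`
becomes `v² - 4(t - 1)²C`, and `(t, v, C)` ranges over all of `F³`. For `t = 1` this is `v²`, a
nonzero square for the `q(q - 1)` pairs with `v ≠ 0`. For `t ≠ 1` and fixed `v` it is an affine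
bijection in `C`, so it hits each of the `(q - 1)/2` nonzero squares once. In total
`q(q - 1) + (q - 1) q (q - 1)/2 = (q² - q)(q + 1)/2`.
-/

section

open Finset

theorem card_filter_prod {α β : Type*} [Fintype α] [Fintype β] (p : α × β → Prop)
    [DecidablePred p] : #{x : α × β | p x} = ∑ a, #{b : β | p (a, b)} := by
  simp only [card_filter, Fintype.sum_prod_type]

variable {F : Type*} [Field F] [Fintype F]

theorem two_mul_card_nonzero_isSquare [DecidableEq F] (hchar : ringChar F ≠ 2) :
    2 * #{d : F | d ≠ 0 ∧ IsSquare d} = Fintype.card F - 1 := by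
  have card_sqrts : ∀ d ∈ ({d : F | d ≠ 0 ∧ IsSquare d} : Finset F),
      #{x ∈ ({x : F | x ≠ 0} : Finset F) | x ^ 2 = d} = 2 := by
    intro d hd
    rw [mem_filter_univ] at hd
    have h := quadraticChar_card_sqrts hchar d
    rw [(quadraticChar_one_iff_isSquare hd.1).mpr hd.2, Set.toFinset_ofPred] at h
    have h2 : #{x : F | x ^ 2 = d} = 2 := by exact_mod_cast h
    refine (congrArg card ?_).trans h2
    rw [filter_filter]
    congr 1
    ext x
    exact and_iff_right_of_imp fun hx hx0 => hd.1 (by simp [← hx, hx0])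
  calc 2 * #{d : F | d ≠ 0 ∧ IsSquare d}
      = ∑ d ∈ ({d : F | d ≠ 0 ∧ IsSquare d} : Finset F),
          #{x ∈ ({x : F | x ≠ 0} : Finset F) | x ^ 2 = d} := by
        rw [sum_const_nat card_sqrts, mul_comm]
    _ = #{x : F | x ≠ 0} := by
        refine (card_eq_sum_card_fiberwise fun x hx => ?_).symm
        rw [mem_coe, mem_filter_univ] at hx ⊢
        exact ⟨pow_ne_zero 2 hx, IsSquare.sq x⟩
    _ = Fintype.card F - 1 := by
        rw [filter_ne', card_erase_of_mem (mem_univ _), card_univ]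

theorem card_filter_affine (p : F → Prop) [DecidablePred p] {a : F} (ha : a ≠ 0) (b : F) :
    #{x : F | p (b + a * x)} = #{y : F | p y} :=
  card_equiv ((Equiv.mulLeft₀ a ha).trans (Equiv.addLeft b)) (by simp)

theorem card_sq_sub_mul_nonzero_isSquare [DecidableEq F] {a : F} (ha : a ≠ 0) :
    #{y : F × F | y.1 ^ 2 - a * y.2 ≠ 0 ∧ IsSquare (y.1 ^ 2 - a * y.2)} =
      Fintype.card F * #{d : F | d ≠ 0 ∧ IsSquare d} := by
  rw [card_filter_prod, ← card_univ, ← smul_eq_mul, ← sum_const]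
  refine sum_congr rfl fun v _ => ?_
  simp only [sub_eq_add_neg, ← neg_mul]
  exact card_filter_affine (fun d => d ≠ 0 ∧ IsSquare d) (neg_ne_zero.mpr ha) (v ^ 2)

theorem card_sq_nonzero_isSquare [DecidableEq F] :
    #{y : F × F | y.1 ^ 2 ≠ 0 ∧ IsSquare (y.1 ^ 2)} =
      (Fintype.card F - 1) * Fintype.card F := by
  have h : ({y : F × F | y.1 ^ 2 ≠ 0 ∧ IsSquare (y.1 ^ 2)} : Finset (F × F)) =
      univ.erase 0 ×ˢ univ := by
    ext y
    simp [IsSquare.sq]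
  rw [h, card_product, card_erase_of_mem (mem_univ _), card_univ]

theorem card_cubic_root_filter_eq_card_sq_sub [DecidableEq F] (p : F → Prop) [DecidablePred p] :
    #{x : F × F × F × F | x.1 ^ 3 - x.2.1 * x.1 ^ 2 + x.2.2.1 * x.1 - x.2.2.2 = 0 ∧
        p ((x.2.1 - x.2.2.2) ^ 2 + 8 * x.2.2.2 - 4 * x.2.2.1)} =
      #{y : F × F × F | p (y.2.1 ^ 2 - (2 * (y.1 - 1)) ^ 2 * y.2.2)} := by
  symm
  refine card_nbij'
    (fun ⟨t, v, C⟩ => (t, v + 2 * t + C * t, C + (v + t + C * t) * t, C * t))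
    (fun ⟨t, S, R, P⟩ => (t, S - 2 * t - (R - (S - t) * t) * t, R - (S - t) * t))
    ?_ ?_ ?_ ?_
  · rintro ⟨t, v, C⟩ h
    simp only [mem_coe, mem_filter_univ] at h ⊢
    refine ⟨by ring, ?_⟩
    convert h using 1
    ring
  · rintro ⟨t, S, R, P⟩ h
    simp only [mem_coe, mem_filter_univ] at h ⊢
    obtain rfl : P = t ^ 3 - S * t ^ 2 + R * t := by linear_combination -h.1
    convert h.2 using 1
    ring
  · rintro ⟨t, v, C⟩ -
    simp only [Prod.mk.injEq, true_and]
    constructor <;> ring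
  · rintro ⟨t, S, R, P⟩ h
    simp only [mem_coe, mem_filter_univ] at h
    simp only [Prod.mk.injEq, true_and]
    exact ⟨by ring, by ring, by linear_combination h.1⟩

theorem card_cubic_root_nonzero_isSquare [DecidableEq F] (hchar : ringChar F ≠ 2) :
    #{x : F × F × F × F | x.1 ^ 3 - x.2.1 * x.1 ^ 2 + x.2.2.1 * x.1 - x.2.2.2 = 0 ∧
        (x.2.1 - x.2.2.2) ^ 2 + 8 * x.2.2.2 - 4 * x.2.2.1 ≠ 0 ∧
        IsSquare ((x.2.1 - x.2.2.2) ^ 2 + 8 * x.2.2.2 - 4 * x.2.2.1)} =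
      (Fintype.card F - 1) * Fintype.card F +
        (Fintype.card F - 1) * (Fintype.card F * #{d : F | d ≠ 0 ∧ IsSquare d}) := by
  have hfiber : ∀ t ∈ ({1}ᶜ : Finset F),
      #{y : F × F | y.1 ^ 2 - (2 * (t - 1)) ^ 2 * y.2 ≠ 0 ∧
        IsSquare (y.1 ^ 2 - (2 * (t - 1)) ^ 2 * y.2)} =
      Fintype.card F * #{d : F | d ≠ 0 ∧ IsSquare d} := fun t ht =>
    card_sq_sub_mul_nonzero_isSquare
      (pow_ne_zero 2 (mul_ne_zero (Ring.two_ne_zero hchar) (sub_ne_zero.mpr (by simpa using ht))))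
  rw [card_cubic_root_filter_eq_card_sq_sub (fun d => d ≠ 0 ∧ IsSquare d), card_filter_prod,
    Fintype.sum_eq_add_sum_compl 1, sum_congr rfl hfiber]
  simp only [sub_self, mul_zero, zero_pow two_ne_zero, zero_mul, sub_zero]
  rw [card_sq_nonzero_isSquare, sum_const, card_compl, card_singleton, smul_eq_mul]

theorem two_mul_card_cubic_root_nonzero_isSquare [DecidableEq F] (hchar : ringChar F ≠ 2) :
    2 * #{x : F × F × F × F | x.1 ^ 3 - x.2.1 * x.1 ^ 2 + x.2.2.1 * x.1 - x.2.2.2 = 0 ∧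
        (x.2.1 - x.2.2.2) ^ 2 + 8 * x.2.2.2 - 4 * x.2.2.1 ≠ 0 ∧
        IsSquare ((x.2.1 - x.2.2.2) ^ 2 + 8 * x.2.2.2 - 4 * x.2.2.1)} =
      (Fintype.card F ^ 2 - Fintype.card F) * (Fintype.card F + 1) := by
  rw [card_cubic_root_nonzero_isSquare hchar]
  have hsquares := two_mul_card_nonzero_isSquare (F := F) hchar
  have hpos := Fintype.card_pos (α := F)
  generalize #{d : F | d ≠ 0 ∧ IsSquare d} = k at hsquares
  generalize Fintype.card F = q at hsquares hpos ⊢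
  obtain rfl : q = 2 * k + 1 := by omega
  have hsq : (2 * k + 1) ^ 2 - (2 * k + 1) = 2 * k * (2 * k + 1) := by
    rw [Nat.sub_eq_iff_eq_add (by nlinarith)]
    ring
  rw [hsq, Nat.add_sub_cancel]
  ring

end

theorem stmt2_general (q : ℕ) (hodd : Odd q)
    (F : Type*) [Field F] [Fintype F] (hF : Fintype.card F = q) :
    Nat.card {x : F × F × F × F |
      x.1 ^ 3 - x.2.1 * x.1 ^ 2 + x.2.2.1 * x.1 - x.2.2.2 = 0 ∧
      (x.2.1 - x.2.2.2) ^ 2 + 8 * x.2.2.2 - 4 * x.2.2.1 ≠ 0 ∧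
      IsSquare ((x.2.1 - x.2.2.2) ^ 2 + 8 * x.2.2.2 - 4 * x.2.2.1)} =
      (q ^ 2 - q) * (q + 1) / 2 := by
  classical
  have hchar : ringChar F ≠ 2 := fun h =>
    Nat.not_even_iff_odd.mpr hodd (hF ▸ Nat.even_iff.mpr (FiniteField.even_card_of_char_two h))
  rw [Nat.card_coe_set_eq, Set.ncard_eq_toFinset_card', Set.toFinset_ofPred, ← hF,
    ← two_mul_card_cubic_root_nonzero_isSquare hchar, Nat.mul_div_cancel_left _ two_pos]

/-- For `q` an odd prime power, the number of pairs `(t, (S,R,P))` with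
`t³ − St² + Rt − P = 0` and `(S−P)² + 8P − 4R` a nonzero square equals `(q²−q)(q+1)/2`. -/
theorem stmt2 (p n q : ℕ) [Fact p.Prime] (hn : 0 < n) (hq : q = p ^ n) (hodd : Odd q)
    (F : Type*) [Field F] [Fintype F] (hF : Fintype.card F = q) :
    Nat.card {x : F × F × F × F |
      x.1 ^ 3 - x.2.1 * x.1 ^ 2 + x.2.2.1 * x.1 - x.2.2.2 = 0 ∧
      (x.2.1 - x.2.2.2) ^ 2 + 8 * x.2.2.2 - 4 * x.2.2.1 ≠ 0 ∧
      IsSquare ((x.2.1 - x.2.2.2) ^ 2 + 8 * x.2.2.2 - 4 * x.2.2.1)} =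
      (q ^ 2 - q) * (q + 1) / 2 :=
  stmt2_general q hodd F hF
end

section
/- Let q be an even prime power (q = 2^n). The number of triples (S,R,P) ∈ F_q³ with P ≠ S such that the polynomial U² + U + R(S+P+R+1)/(P+S)² has two roots in F_q equals (q³−q²)/2. -/
/-!
Put `a = P + S`, which is nonzero exactly when `P ≠ S` since the characteristic is 2. The
substitution `W = U + R / a` turns the equation into `R = a² (W² + W)`. The map
`W ↦ a² (W² + W)` is additive with kernel `{0, 1}`, so for each of the `q² - q` pairs `(S, P)`
with `P ≠ S` exactly `q / 2` values of `R` are admissible.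
-/

open Finset

section CharTwo

variable {F : Type*} [Field F] [CharP F 2]

lemma sq_add_self_eq_sq_add_self_iff {V W : F} : V ^ 2 + V = W ^ 2 + W ↔ V = W ∨ V = W + 1 := by
  have key : V ^ 2 + V + (W ^ 2 + W) = (V + W) * (V + W + 1) := by
    linear_combination (-W * V) * CharTwo.two_eq_zero (R := F)
  rw [← CharTwo.add_eq_zero, key, mul_eq_zero, CharTwo.add_eq_zero, add_assoc,
    CharTwo.add_eq_zero]

lemma mul_sq_add_mul_add_eq {a : F} (ha : a ≠ 0) (U R : F) :
    a ^ 2 * U ^ 2 + a ^ 2 * U + R * (a + R + 1) =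
      a ^ 2 * ((U + R / a) ^ 2 + (U + R / a)) + R := by
  field_simp
  linear_combination (-(a * U * R)) * CharTwo.two_eq_zero (R := F)

lemma exists_root_iff_exists_mul_sq_add_self {a R : F} (ha : a ≠ 0) :
    (∃ U, a ^ 2 * U ^ 2 + a ^ 2 * U + R * (a + R + 1) = 0) ↔ ∃ W, a ^ 2 * (W ^ 2 + W) = R := by
  simp_rw [mul_sq_add_mul_add_eq ha, CharTwo.add_eq_zero]
  constructor
  · rintro ⟨U, hU⟩; exact ⟨_, hU⟩
  · rintro ⟨W, hW⟩; exact ⟨W + R / a, by rwa [add_assoc, CharTwo.add_self_eq_zero, add_zero]⟩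

lemma card_eq_two_mul_card_image_mul_sq_add_self [Fintype F] [DecidableEq F] {c : F}
    (hc : c ≠ 0) : Fintype.card F = 2 * #(univ.image fun W : F ↦ c * (W ^ 2 + W)) := by
  rw [← card_univ, card_eq_sum_card_image (fun W : F ↦ c * (W ^ 2 + W)), mul_comm,
    sum_const_nat]
  intro b hb
  obtain ⟨W, -, rfl⟩ := mem_image.1 hb
  have hfiber : ({V | c * (V ^ 2 + V) = c * (W ^ 2 + W)} : Finset F) = {W, W + 1} := by
    ext V
    simp [mul_right_inj' hc, sq_add_self_eq_sq_add_self_iff]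
  rw [hfiber, card_pair (by simp)]

end CharTwo

lemma charP_two_of_card_eq_two_pow {F : Type*} [Field F] [Fintype F] {n : ℕ} (hn : n ≠ 0)
    (hF : Fintype.card F = 2 ^ n) : CharP F 2 := by
  refine CharTwo.of_one_ne_zero_of_two_eq_zero one_ne_zero ?_
  have h := FiniteField.cast_card_eq_zero F
  rw [hF, Nat.cast_pow, Nat.cast_ofNat] at h
  exact pow_eq_zero_iff hn |>.1 h

lemma natCard_setOf_mem_eq_sum_card {α β γ : Type*} (D : Finset (α × γ)) (A : α × γ → Finset β) :
    Nat.card {x : α × β × γ | (x.1, x.2.2) ∈ D ∧ x.2.1 ∈ A (x.1, x.2.2)} = ∑ d ∈ D, #(A d) := by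
  classical
  let e : (Σ _ : α × γ, β) → α × β × γ := fun d ↦ (d.1.1, d.2, d.1.2)
  have he : e.Injective := by
    rintro ⟨⟨_, _⟩, _⟩ ⟨⟨_, _⟩, _⟩ h
    simp_all [e]
  have hset : {x : α × β × γ | (x.1, x.2.2) ∈ D ∧ x.2.1 ∈ A (x.1, x.2.2)} =
      ↑((D.sigma A).image e) := by
    ext ⟨a, b, c⟩
    simp [e]
  rw [hset, Nat.card_coe_set_eq, Set.ncard_coe_finset, card_image_of_injective _ he, card_sigma]

/-- For `q = 2^n`, the number of triples `(S,R,P) ∈ F_q³` with `P ≠ S` such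
that `(P+S)²U² + (P+S)²U + R(S+P+R+1) = 0` has a solution `U ∈ F_q` equals `(q³−q²)/2`. -/
theorem stmt9 (n q : ℕ) (hn : 0 < n) (hq : q = 2 ^ n)
    (F : Type*) [Field F] [Fintype F] (hF : Fintype.card F = q) :
    Nat.card {x : F × F × F | x.2.2 ≠ x.1 ∧ ∃ U : F,
      (x.2.2 + x.1) ^ 2 * U ^ 2 + (x.2.2 + x.1) ^ 2 * U +
        x.2.1 * (x.1 + x.2.2 + x.2.1 + 1) = 0} = (q ^ 3 - q ^ 2) / 2 := by
  classical
  have : CharP F 2 := charP_two_of_card_eq_two_pow hn.ne' (hq ▸ hF)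
  let A : F × F → Finset F := fun d ↦ univ.image fun W ↦ (d.2 + d.1) ^ 2 * (W ^ 2 + W)
  have hset : {x : F × F × F | x.2.2 ≠ x.1 ∧ ∃ U : F,
      (x.2.2 + x.1) ^ 2 * U ^ 2 + (x.2.2 + x.1) ^ 2 * U +
        x.2.1 * (x.1 + x.2.2 + x.2.1 + 1) = 0} =
      {x | (x.1, x.2.2) ∈ (univ : Finset F).offDiag ∧ x.2.1 ∈ A (x.1, x.2.2)} := by
    ext ⟨S, R, P⟩
    simp only [Set.mem_ofPred_eq, mem_offDiag, mem_univ, true_and, ne_comm (a := S), A,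
      mem_image]
    refine and_congr_right fun hPS ↦ ?_
    rw [add_comm S P, exists_root_iff_exists_mul_sq_add_self (by rwa [Ne, CharTwo.add_eq_zero])]
  have hA : ∀ d ∈ (univ : Finset F).offDiag, #(A d) = q / 2 := by
    intro d hd
    have ha : d.2 + d.1 ≠ 0 := by
      rw [Ne, CharTwo.add_eq_zero]; exact (mem_offDiag.1 hd).2.2.symm
    rw [← hF, card_eq_two_mul_card_image_mul_sq_add_self (pow_ne_zero 2 ha)]
    simp [A]
  have hq2 : 2 ∣ q := hq ▸ dvd_pow_self 2 hn.ne'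
  have hcube : q ^ 3 - q ^ 2 = (q * q - q) * q := by rw [Nat.sub_mul]; ring_nf
  rw [hset, natCard_setOf_mem_eq_sum_card, sum_const_nat hA, offDiag_card, card_univ, hF, hcube,
    Nat.mul_div_assoc _ hq2]
end

section
/- Let q = 2^n and let α, β, γ ∈ F_q with α ≠ 0 and α(β²+1) ≠ (γ+β)(γ+1). The number of pairs (X,Y) ∈ F_q² with X ≠ γ satisfying Y² + Y = α(X+1)(X+β)/(X²+γ²) equals q if Tr_{F_q/F_2}(α) = 1, and equals q−2 if Tr_{F_q/F_2}(α) = 0. -/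
/-!
Let `s` be the square root of `α(γ+1)(γ+β)` and `c = α(β+1) + s`. In characteristic 2 the
right-hand side splits as `α + α(β+1)/(X+γ) + (s/(X+γ))²`, so its trace is
`Tr α + Tr (c/(X+γ))`; as `α ≠ 0`, the hypothesis `α(β²+1) ≠ (γ+β)(γ+1)` says exactly that
`c ≠ 0`. By Artin–Schreier, `Y² + Y = r` has two solutions if `Tr r = 0` and none otherwise, so
the count is twice the number of `X ≠ γ` with `Tr (c/(X+γ)) = Tr α`. Since `X ↦ c/(X+γ)` maps
`F ∖ {γ}` bijectively onto `Fˣ`, and each fibre of the trace has `q/2` elements, this is `q` when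
`Tr α = 1` and `q - 2` when `Tr α = 0` (the value `0` is excluded).
-/

open Finset

theorem AddMonoidHom.card_image_mul_card_fiber {G H : Type*} [AddGroup G] [Fintype G]
    [AddGroup H] [DecidableEq H] (f : G →+ H) {t : H} (ht : t ∈ Set.range f) :
    #(univ.image f) * #{g | f g = t} = Fintype.card G := by
  rw [← card_univ, card_eq_sum_card_image f univ, ← smul_eq_mul, ← sum_const]
  exact sum_congr rfl fun s hs => card_fiber_eq_of_mem_range f ht (by simpa using hs)

theorem Nat.card_setOf_prod {α β : Type*} [Fintype α] [Fintype β] (P : α → β → Prop)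
    [∀ a, DecidablePred (P a)] :
    Nat.card {p : α × β | P p.1 p.2} = ∑ a, #{b | P a b} := by
  classical
  rw [Nat.card_eq_fintype_card, Fintype.card_subtype, card_filter, Fintype.sum_prod_type]
  simp only [Set.mem_ofPred_eq, card_filter]

theorem Algebra.trace_pow_card {K L : Type*} [Field K] [Fintype K] [Field L] [Algebra K L]
    [Algebra.IsAlgebraic K L] (x : L) :
    Algebra.trace K L (x ^ Fintype.card K) = Algebra.trace K L x :=
  Algebra.trace_eq_of_algEquiv (FiniteField.frobeniusAlgEquivOfAlgebraic K L) x

theorem FiniteField.card_mul_card_trace_fiber {K L : Type*} [Field K] [Fintype K] [Field L]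
    [Fintype L] [Algebra K L] [DecidableEq K] (t : K) :
    Fintype.card K * #{x : L | Algebra.trace K L x = t} = Fintype.card L := by
  have hsurj := Algebra.trace_surjective K L
  have := (Algebra.trace K L).toAddMonoidHom.card_image_mul_card_fiber (hsurj t)
  rwa [LinearMap.toAddMonoidHom_coe, image_univ_of_surjective hsurj, card_univ] at this

theorem card_ne_and_div_sub {K : Type*} [Field K] [Fintype K] [DecidableEq K] {c : K}
    (hc : c ≠ 0) (γ : K) (p : K → Prop) [DecidablePred p] :
    #{x | x ≠ γ ∧ p (c / (x - γ))} = #{v | v ≠ 0 ∧ p v} := by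
  refine card_nbij' (fun x => c / (x - γ)) (fun v => γ + c / v) ?_ ?_ ?_ ?_
  · intro x hx
    simp only [coe_filter, mem_univ, true_and, Set.mem_ofPred_eq] at hx ⊢
    exact ⟨div_ne_zero hc (sub_ne_zero.2 hx.1), hx.2⟩
  · intro v hv
    simp only [coe_filter, mem_univ, true_and, Set.mem_ofPred_eq] at hv ⊢
    simpa [div_div_cancel₀ hc, hc, hv.1] using hv.2
  · intro x _
    simp [div_div_cancel₀ hc]
  · intro v _
    simp [div_div_cancel₀ hc]

theorem charP_two_of_algebra_zmod_two {F : Type*} [Field F] [Algebra (ZMod 2) F] : CharP F 2 :=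
  charP_of_injective_algebraMap (algebraMap (ZMod 2) F).injective 2

namespace CharTwo

variable {R : Type*} [CommRing R] [CharP R 2]

def artinSchreier : R →+ R where
  toFun y := y ^ 2 + y
  map_zero' := by ring
  map_add' a b := by rw [CharTwo.add_sq]; ring

theorem artinSchreier_apply (y : R) : artinSchreier y = y ^ 2 + y := rfl

variable {F : Type*} [Field F] [CharP F 2]

theorem mul_add_one_mul_add_div_sq_add_sq {α β γ s x : F} (hs : s ^ 2 = α * (γ + 1) * (γ + β))
    (hx : x ≠ γ) :
    α * (x + 1) * (x + β) / (x ^ 2 + γ ^ 2) = α + α * (β + 1) / (x + γ) + (s / (x + γ)) ^ 2 := by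
  have hxγ : x + γ ≠ 0 := by rwa [← CharTwo.sub_eq_add, sub_ne_zero]
  rw [← CharTwo.add_sq, div_pow, hs]
  field_simp
  linear_combination (-(α * (x * γ + γ ^ 2 + β * γ + γ))) * CharTwo.two_eq_zero (R := F)

theorem add_ne_zero_of_sq_eq {α β γ s : F} (hα : α ≠ 0)
    (h : α * (β ^ 2 + 1) ≠ (γ + β) * (γ + 1)) (hs : s ^ 2 = α * (γ + 1) * (γ + β)) :
    α * (β + 1) + s ≠ 0 := by
  intro hsum
  rw [CharTwo.add_eq_zero] at hsum
  subst hsum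
  refine h (mul_left_cancel₀ hα ?_)
  linear_combination hs - α ^ 2 * β * CharTwo.two_eq_zero (R := F)

end CharTwo

namespace FiniteField

open CharTwo

variable {F : Type*} [Field F] [Algebra (ZMod 2) F]

attribute [local instance] charP_two_of_algebra_zmod_two

variable [Fintype F]

local notation "Tr" => Algebra.trace (ZMod 2) F

theorem trace_zmod_two_sq (x : F) : Tr (x ^ 2) = Tr x := by
  simpa [ZMod.card] using Algebra.trace_pow_card (K := ZMod 2) x

theorem two_mul_card_trace_zmod_two_fiber (t : ZMod 2) :
    2 * #{x : F | Tr x = t} = Fintype.card F := by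
  simpa [ZMod.card] using card_mul_card_trace_fiber (L := F) t

theorem card_artinSchreier_fiber_zero [DecidableEq F] : #{y : F | artinSchreier y = 0} = 2 := by
  have : ({y : F | artinSchreier y = 0} : Finset F) = {0, 1} := by
    ext y
    simp only [mem_filter, mem_univ, true_and, mem_insert, mem_singleton]
    rw [artinSchreier_apply, sq, ← mul_add_one, mul_eq_zero, CharTwo.add_eq_zero]
  rw [this, card_pair zero_ne_one]

theorem image_artinSchreier [DecidableEq F] :
    univ.image (artinSchreier (R := F)) = ({c | Tr c = 0} : Finset F) := by
  have hsub : univ.image (artinSchreier (R := F)) ⊆ ({c | Tr c = 0} : Finset F) := by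
    simp [subset_iff, artinSchreier_apply, trace_zmod_two_sq, CharTwo.add_self_eq_zero]
  refine eq_of_subset_of_card_le hsub (Nat.le_of_mul_le_mul_left ?_ two_pos)
  have h := (artinSchreier (R := F)).card_image_mul_card_fiber ⟨0, map_zero _⟩
  rw [card_artinSchreier_fiber_zero] at h
  rw [two_mul_card_trace_zmod_two_fiber, mul_comm, h]

theorem card_sq_add_self_eq [DecidableEq F] (c : F) :
    #{y : F | y ^ 2 + y = c} = if Tr c = 0 then 2 else 0 := by
  have hrange : c ∈ Set.range (artinSchreier (R := F)) ↔ Tr c = 0 := by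
    rw [← Set.image_univ, ← coe_univ, ← coe_image, image_artinSchreier]
    simp
  split_ifs with hc
  · exact (AddMonoidHom.card_fiber_eq_of_mem_range _ (hrange.2 hc) ⟨0, map_zero _⟩).trans
      card_artinSchreier_fiber_zero
  · rw [card_eq_zero, filter_eq_empty_iff]
    exact fun y _ hy => hc (hrange.1 ⟨y, hy⟩)

theorem trace_mul_add_one_mul_add_div_sq_add_sq {α β γ s x : F}
    (hs : s ^ 2 = α * (γ + 1) * (γ + β)) (hx : x ≠ γ) :
    Tr (α * (x + 1) * (x + β) / (x ^ 2 + γ ^ 2)) = Tr α + Tr ((α * (β + 1) + s) / (x + γ)) := by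
  rw [mul_add_one_mul_add_div_sq_add_sq hs hx, map_add, map_add, trace_zmod_two_sq, add_assoc,
    ← map_add, add_div]

theorem two_mul_card_ne_zero_trace_eq [DecidableEq F] (t : ZMod 2) :
    2 * #{v : F | v ≠ 0 ∧ Tr v = t} = if t = 1 then Fintype.card F else Fintype.card F - 2 := by
  obtain rfl | rfl : t = 0 ∨ t = 1 := by revert t; decide
  · have hzero : (0 : F) ∈ ({v | Tr v = 0} : Finset F) := by simp
    have hfilter : ({v | v ≠ 0 ∧ Tr v = 0} : Finset F) = ({v | Tr v = 0} : Finset F).erase 0 := by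
      ext v; simp
    rw [hfilter, card_erase_of_mem hzero, if_neg zero_ne_one, Nat.mul_sub_one,
      two_mul_card_trace_zmod_two_fiber]
  · have hfilter : ({v | v ≠ 0 ∧ Tr v = 1} : Finset F) = ({v | Tr v = 1} : Finset F) := by
      ext v
      simp only [mem_filter, mem_univ, true_and, and_iff_right_iff_imp]
      rintro h rfl
      simp at h
    rw [hfilter, if_pos rfl, two_mul_card_trace_zmod_two_fiber]

end FiniteField

theorem stmt11_general (q : ℕ)
    (F : Type*) [Field F] [Fintype F] [Algebra (ZMod 2) F] (hF : Fintype.card F = q)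
    (α β γ : F) (hα : α ≠ 0) (h2 : α * (β ^ 2 + 1) ≠ (γ + β) * (γ + 1)) :
    Nat.card {x : F × F | x.1 ≠ γ ∧
      x.2 ^ 2 + x.2 = α * (x.1 + 1) * (x.1 + β) / (x.1 ^ 2 + γ ^ 2)} =
      if Algebra.trace (ZMod 2) F α = 1 then q else q - 2 := by
  classical
  have : CharP F 2 := charP_two_of_algebra_zmod_two
  obtain ⟨s, hs⟩ : ∃ s : F, s ^ 2 = α * (γ + 1) * (γ + β) := by
    obtain ⟨s, hs⟩ := FiniteField.isSquare_of_char_two (ringChar.eq F 2) (α * (γ + 1) * (γ + β))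
    exact ⟨s, by rw [hs, sq]⟩
  set Tr := Algebra.trace (ZMod 2) F
  set c := α * (β + 1) + s
  have hfiber (x : F) :
      #{y | x ≠ γ ∧ y ^ 2 + y = α * (x + 1) * (x + β) / (x ^ 2 + γ ^ 2)} =
        if x ≠ γ ∧ Tr (c / (x - γ)) = Tr α then 2 else 0 := by
    by_cases hx : x = γ
    · simp [hx]
    · simp only [hx, ne_eq, not_false_eq_true, true_and]
      -- `convert` only reconciles the decidability instances of the two filters
      convert FiniteField.card_sq_add_self_eq (α * (x + 1) * (x + β) / (x ^ 2 + γ ^ 2)) using 2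
      rw [FiniteField.trace_mul_add_one_mul_add_div_sq_add_sq hs hx, CharTwo.add_eq_zero,
        CharTwo.sub_eq_add, eq_comm]
  calc _ = ∑ x, #{y | x ≠ γ ∧ y ^ 2 + y = α * (x + 1) * (x + β) / (x ^ 2 + γ ^ 2)} :=
        Nat.card_setOf_prod _
    _ = 2 * #{x | x ≠ γ ∧ Tr (c / (x - γ)) = Tr α} := by
        rw [sum_congr rfl fun x _ => hfiber x, ← sum_filter, sum_const, smul_eq_mul, mul_comm]
    _ = 2 * #{v | v ≠ 0 ∧ Tr v = Tr α} := by
        rw [card_ne_and_div_sub (CharTwo.add_ne_zero_of_sq_eq hα h2 hs) γ (fun v => Tr v = Tr α)]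
    _ = _ := by rw [FiniteField.two_mul_card_ne_zero_trace_eq, hF]

/-- For `q = 2^n` and `α, β, γ ∈ F_q` with `α ≠ 0` and
`α(β²+1) ≠ (γ+β)(γ+1)`, the number of pairs `(X,Y)` with `X ≠ γ` and
`Y² + Y = α(X+1)(X+β)/(X²+γ²)` equals `q` if `Tr_{F_q/F_2}(α) = 1` and `q−2` otherwise. -/
theorem stmt11 (n q : ℕ) (hn : 0 < n) (hq : q = 2 ^ n)
    (F : Type*) [Field F] [Fintype F] [Algebra (ZMod 2) F] (hF : Fintype.card F = q)
    (α β γ : F) (hα : α ≠ 0) (h2 : α * (β ^ 2 + 1) ≠ (γ + β) * (γ + 1)) :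
    Nat.card {x : F × F | x.1 ≠ γ ∧
      x.2 ^ 2 + x.2 = α * (x.1 + 1) * (x.1 + β) / (x.1 ^ 2 + γ ^ 2)} =
      if Algebra.trace (ZMod 2) F α = 1 then q else q - 2 :=
  stmt11_general q F hF α β γ hα h2
end

section
/- Let q = 2^n and L ∈ F_{q²} \ F_q with L^{q+1} ≠ 1. Then Tr_{F_q/F_2}( (L+1)^{q+1}(L+L^q) / (L^{q+1}+1)² ) = 0. -/
/-!
With `β = (L + L^q) / (L^{q+1} + 1)`, the element in question is `β² + β`. The numerator and
denominator of `β` are `Tr_{F_{q²}/F_q}(L)` and `N_{F_{q²}/F_q}(L) + 1`, so `β ∈ F_q`; and the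
absolute trace is invariant under the Frobenius `x ↦ x²`, so it kills `β² + β` in characteristic 2.
-/

namespace FiniteField

variable {K M : Type*} [Field K] [Fintype K] [Field M] [Algebra K M]

theorem add_pow_card (x y : M) :
    (x + y) ^ Fintype.card K = x ^ Fintype.card K + y ^ Fintype.card K :=
  map_add (frobeniusAlgHom K M) x y

variable [Fintype M]

theorem finrank_eq_of_card_eq_pow {d : ℕ} (h : Fintype.card M = Fintype.card K ^ d) :
    Module.finrank K M = d :=
  Nat.pow_right_injective Fintype.one_lt_card (Module.card_eq_pow_finrank.symm.trans h)

theorem algebraMap_trace_of_finrank_eq_two (h : Module.finrank K M = 2) (x : M) :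
    algebraMap K M (Algebra.trace K M x) = x + x ^ Fintype.card K := by
  rw [algebraMap_trace_eq_sum_pow, h, Nat.card_eq_fintype_card]
  simp [Finset.sum_range_succ]

theorem algebraMap_norm_of_finrank_eq_two (h : Module.finrank K M = 2) (x : M) :
    algebraMap K M (Algebra.norm K x) = x ^ (Fintype.card K + 1) := by
  rw [algebraMap_norm_eq_pow_sum, h, Nat.card_eq_fintype_card]
  simp [Finset.sum_range_succ, add_comm]

variable (K M) in
theorem algebraTrace_pow_card (x : M) :
    Algebra.trace K M (x ^ Fintype.card K) = Algebra.trace K M x :=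
  Algebra.trace_eq_of_algEquiv (frobeniusAlgEquivOfAlgebraic K M) x

theorem trace_zmod_two_sq_add_self {F : Type*} [Field F] [Fintype F] [Algebra (ZMod 2) F]
    (b : F) : Algebra.trace (ZMod 2) F (b ^ 2 + b) = 0 := by
  have h := algebraTrace_pow_card (ZMod 2) F b
  rw [ZMod.card] at h
  rw [map_add, h, CharTwo.add_self_eq_zero]

end FiniteField

theorem stmt12_general (q : ℕ)
    (K M : Type*) [Field K] [Fintype K] [Field M] [Fintype M] [Algebra K M]
    [Algebra (ZMod 2) K] (hK : Fintype.card K = q) (hM : Fintype.card M = q ^ 2)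
    (l : M) (h1 : l ^ (q + 1) ≠ 1) :
    ∃ a : K, algebraMap K M a =
        (l + 1) ^ (q + 1) * (l + l ^ q) / (l ^ (q + 1) + 1) ^ 2 ∧
      Algebra.trace (ZMod 2) K a = 0 := by
  subst hK
  have : CharP K 2 := charP_of_injective_algebraMap (algebraMap (ZMod 2) K).injective 2
  have : CharP M 2 := charP_of_injective_algebraMap' K 2
  have hrank := FiniteField.finrank_eq_of_card_eq_pow hM
  have hden : l ^ (Fintype.card K + 1) + 1 ≠ 0 := by
    rwa [Ne, CharTwo.add_eq_zero]
  obtain ⟨β, hβ⟩ : ∃ β : K,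
      algebraMap K M β = (l + l ^ Fintype.card K) / (l ^ (Fintype.card K + 1) + 1) :=
    ⟨Algebra.trace K M l / (Algebra.norm K l + 1), by
      rw [map_div₀, map_add, map_one, FiniteField.algebraMap_trace_of_finrank_eq_two hrank,
        FiniteField.algebraMap_norm_of_finrank_eq_two hrank]⟩
  refine ⟨β ^ 2 + β, ?_, FiniteField.trace_zmod_two_sq_add_self β⟩
  rw [map_add, map_pow, hβ, pow_succ (l + 1), FiniteField.add_pow_card, one_pow]
  field_simp
  ring

/-- For `q = 2^n` and `L ∈ F_{q²} \ F_q` with `L^{q+1} ≠ 1`, the element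
`(L+1)^{q+1}(L+L^q)/(L^{q+1}+1)²` lies in `F_q` and has absolute trace `0`. -/
theorem stmt12 (n q : ℕ) (hn : 0 < n) (hq : q = 2 ^ n)
    (K M : Type*) [Field K] [Fintype K] [Field M] [Fintype M] [Algebra K M]
    [Algebra (ZMod 2) K] (hK : Fintype.card K = q) (hM : Fintype.card M = q ^ 2)
    (l : M) (hl : l ∉ Set.range (algebraMap K M)) (h1 : l ^ (q + 1) ≠ 1) :
    ∃ a : K, algebraMap K M a =
        (l + 1) ^ (q + 1) * (l + l ^ q) / (l ^ (q + 1) + 1) ^ 2 ∧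
      Algebra.trace (ZMod 2) K a = 0 :=
  stmt12_general q K M hK hM l h1
end

section
/- Let q = 2^n. The number of K ∈ F_q \ {0,1} such that U² + U = 1/(K+1) has a solution U ∈ F_q equals (q−4)/2 if n is even and (q−2)/2 if n is odd; equivalently, it equals (q − 2·gcd(n,2))/2. -/
/-! In characteristic two `u ↦ u ^ 2 + u` is additive with kernel `{0, 1}`, so its image `R` has
`q / 2` elements, and `k ↦ (k + 1)⁻¹` is a permutation of `F` exchanging `0` and `1` (as `0⁻¹ = 0`).
The count is therefore `#(R \ {0, 1})`. Always `0 ∈ R`, while `u ^ 2 + u = 1` says that `u` has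
multiplicative order `3`, which happens for some `u` iff `3 ∣ 2 ^ n - 1`, i.e. iff `n` is even. -/

theorem Nat.three_dvd_two_pow_sub_one_iff (n : ℕ) : 3 ∣ 2 ^ n - 1 ↔ Even n := by
  rw [← Nat.modEq_iff_dvd' n.one_le_two_pow, ← ZMod.natCast_eq_natCast_iff, Nat.cast_pow,
    show ((2 : ℕ) : ZMod 3) = -1 from rfl, eq_comm, Nat.cast_one,
    neg_one_pow_eq_one_iff_even (by decide)]

theorem FiniteField.exists_orderOf_eq_iff_dvd_card_sub_one {F : Type*} [Field F] [Fintype F]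
    {p : ℕ} [hp : Fact p.Prime] : (∃ u : F, orderOf u = p) ↔ p ∣ Fintype.card F - 1 := by
  classical
  rw [← Fintype.card_units]
  constructor
  · rintro ⟨u, hu⟩
    have hu0 : u ≠ 0 := by
      rintro rfl
      exact hp.out.ne_zero (hu ▸ orderOf_eq_zero_iff'.mpr fun n hn => by simp [hn.ne'])
    exact hu ▸ orderOf_units (y := Units.mk0 u hu0) ▸ orderOf_dvd_card
  · intro h
    obtain ⟨g, hg⟩ := exists_prime_orderOf_dvd_card p h
    exact ⟨g, orderOf_units.trans hg⟩

section Ring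

variable (R : Type*) [CommRing R] [CharP R 2]

def artinSchreier : R →+ R :=
  (frobenius R 2).toAddMonoidHom + AddMonoidHom.id R

variable {R}

@[simp]
theorem artinSchreier_apply (u : R) : artinSchreier R u = u ^ 2 + u := rfl

variable [IsDomain R]

theorem artinSchreier_eq_zero_iff {u : R} : artinSchreier R u = 0 ↔ u = 0 ∨ u = 1 := by
  rw [artinSchreier_apply, show u ^ 2 + u = u * (u + 1) by ring, mul_eq_zero,
    CharTwo.add_eq_zero]

theorem artinSchreier_eq_one_iff {u : R} : artinSchreier R u = 1 ↔ orderOf u = 3 := by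
  have h2 : (2 : R) = 0 := CharTwo.two_eq_zero
  rw [artinSchreier_apply]
  constructor
  · intro h
    refine orderOf_eq_prime (by linear_combination (u - 1) * h + (u - 1) * h2) ?_
    rintro rfl
    exact one_ne_zero (by linear_combination h : (1 : R) = 0)
  · intro h
    have h3 : u ^ 3 = 1 := h ▸ pow_orderOf_eq_one u
    have hu1 : u + 1 ≠ 0 := by
      rw [Ne, CharTwo.add_eq_zero]
      rintro rfl
      simp at h
    have hcube : (u + 1) * (u ^ 2 + u + 1) = 0 := by
      linear_combination h3 + (u ^ 2 + u + 1) * h2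
    exact CharTwo.add_eq_zero.mp ((mul_eq_zero.mp hcube).resolve_left hu1)

end Ring

section Field

variable {F : Type*} [Field F] [CharP F 2]

theorem inv_add_one_mem_range_artinSchreier_sdiff_iff {k : F} :
    (k + 1)⁻¹ ∈ Set.range (artinSchreier F) \ {0, 1} ↔
      k ≠ 0 ∧ k ≠ 1 ∧ ∃ u, u ^ 2 + u = 1 / (k + 1) := by
  simp only [Set.mem_sdiff, Set.mem_range, artinSchreier_apply, Set.mem_insert_iff,
    Set.mem_singleton_iff, inv_eq_zero, inv_eq_one, CharTwo.add_eq_zero, add_eq_right, one_div]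
  tauto

variable [Fintype F]

theorem two_mul_ncard_range_artinSchreier :
    2 * (Set.range (artinSchreier F)).ncard = Fintype.card F := by
  have hker : Nat.card (artinSchreier F).ker = 2 := by
    rw [← Set.ncard_pair (zero_ne_one' F), ← Nat.card_coe_set_eq]
    exact Nat.card_congr (Equiv.subtypeEquivRight fun _ => artinSchreier_eq_zero_iff)
  rw [← hker, ← Nat.card_eq_fintype_card, ← (artinSchreier F).ker.card_mul_index,
    AddSubgroup.index_ker, ← AddMonoidHom.coe_range, ← Nat.card_coe_set_eq]
  rfl

theorem one_mem_range_artinSchreier_iff {n : ℕ} (hF : Fintype.card F = 2 ^ n) :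
    1 ∈ Set.range (artinSchreier F) ↔ Even n := by
  have : Fact (Nat.Prime 3) := ⟨Nat.prime_three⟩
  simp only [Set.mem_range, artinSchreier_eq_one_iff]
  rw [FiniteField.exists_orderOf_eq_iff_dvd_card_sub_one, hF, Nat.three_dvd_two_pow_sub_one_iff]

theorem ncard_range_artinSchreier_sdiff {n : ℕ} (hF : Fintype.card F = 2 ^ n) :
    (Set.range (artinSchreier F) \ {0, 1}).ncard = (2 ^ n - 2 * n.gcd 2) / 2 := by
  have hcard := two_mul_ncard_range_artinSchreier (F := F)
  have h0 : (0 : F) ∈ Set.range (artinSchreier F) := ⟨0, map_zero _⟩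
  rcases Nat.even_or_odd n with hn | hn
  · have h1 := (one_mem_range_artinSchreier_iff hF).mpr hn
    rw [Set.ncard_sdiff (Set.insert_subset h0 (Set.singleton_subset_iff.mpr h1)),
      Set.ncard_pair zero_ne_one, Nat.gcd_eq_right (even_iff_two_dvd.mp hn)]
    omega
  · have h1 : (1 : F) ∉ Set.range (artinSchreier F) :=
      mt (one_mem_range_artinSchreier_iff hF).mp (Nat.not_even_iff_odd.mpr hn)
    rw [Set.insert_eq, Set.union_comm, ← Set.sdiff_sdiff, Set.sdiff_singleton_eq_self h1,
      Set.ncard_sdiff_singleton_of_mem h0, Nat.Coprime.gcd_eq_one (Nat.coprime_two_right.mpr hn)]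
    omega

end Field

theorem stmt14_general (n q : ℕ) (hq : q = 2 ^ n)
    (F : Type*) [Field F] [Fintype F] (hF : Fintype.card F = q) :
    Nat.card {k : F | k ≠ 0 ∧ k ≠ 1 ∧ ∃ u : F, u ^ 2 + u = 1 / (k + 1)} =
      (q - 2 * Nat.gcd n 2) / 2 := by
  subst hq
  have : CharP F 2 := charP_of_card_eq_prime_pow hF
  rw [← ncard_range_artinSchreier_sdiff hF, ← Nat.card_coe_set_eq]
  exact Nat.card_congr <| ((Equiv.addRight 1).trans (Equiv.inv F)).subtypeEquiv fun _ =>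
    inv_add_one_mem_range_artinSchreier_sdiff_iff.symm

/-- For `q = 2^n`, the number of `K ∈ F_q \ {0,1}` such that
`U² + U = 1/(K+1)` has a solution `U ∈ F_q` equals `(q − 2·gcd(n,2))/2`. -/
theorem stmt14 (n q : ℕ) (hn : 0 < n) (hq : q = 2 ^ n)
    (F : Type*) [Field F] [Fintype F] (hF : Fintype.card F = q) :
    Nat.card {k : F | k ≠ 0 ∧ k ≠ 1 ∧ ∃ u : F, u ^ 2 + u = 1 / (k + 1)} =
      (q - 2 * Nat.gcd n 2) / 2 :=
  stmt14_general n q hq F hF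
end

section
/- Let q be a prime power and F_{q⁶} the field with q⁶ elements. An element t ∈ F_{q⁶}* is a (q²+q+1)-th power in F_{q⁶} if and only if t^{q³+1} ∈ F_q. -/
open scoped Classical

/-- In a finite cyclic group, `t` is an `m`-th power iff `t ^ (N / gcd m N) = 1`. -/
lemma cyclic_exists_pow_iff {G : Type*} [Group G] [Fintype G] [IsCyclic G]
    (m : ℕ) (hm : 0 < m) (t : G) :
    (∃ s : G, s ^ m = t) ↔ t ^ (Fintype.card G / Nat.gcd m (Fintype.card G)) = 1 := by
  obtain ⟨N, hN⟩ : ∃ N, Fintype.card G = N := ⟨_, rfl⟩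
  obtain ⟨d, hd⟩ : ∃ d, Nat.gcd m N = d := ⟨_, rfl⟩
  rw [hN, hd]
  have hN0 : 0 < N := hN ▸ Fintype.card_pos
  have hd0 : 0 < d := hd ▸ Nat.gcd_pos_of_pos_left _ hm
  obtain ⟨e, he⟩ : ∃ e, N = d * e := hd ▸ Nat.gcd_dvd_right m N
  have he' : N / d = e := by rw [he, Nat.mul_div_cancel_left _ hd0]
  have he0 : 0 < e := by
    rcases Nat.eq_zero_or_pos e with h | h
    · subst h; omega
    · exact h
  have hgcard : ∀ x : G, x ^ N = 1 := fun x => by rw [← hN]; exact pow_card_eq_one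
  constructor
  · rintro ⟨s, rfl⟩
    obtain ⟨c, hc⟩ : ∃ c, m = d * c := hd ▸ Nat.gcd_dvd_left m N
    rw [← pow_mul, he']
    have hme : m * e = c * N := by rw [hc, he]; ring
    rw [hme, pow_mul]
    exact hgcard _
  · intro h
    obtain ⟨g, hg⟩ := IsCyclic.exists_generator (α := G)
    have hog : orderOf g = N := by
      rw [orderOf_eq_card_of_forall_mem_zpowers hg, Nat.card_eq_fintype_card, hN]
    obtain ⟨k, hk⟩ := Subgroup.mem_zpowers_iff.mp (hg t)
    -- hk : g ^ k = t with k : ℤ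
    have h1 : g ^ (k * (e : ℤ)) = 1 := by
      rw [zpow_mul, hk, zpow_natCast, ← he']
      exact h
    have h2 : (N : ℤ) ∣ k * e := by
      rw [← hog]
      exact orderOf_dvd_iff_zpow_eq_one.mpr h1
    have h3 : (d : ℤ) ∣ k := by
      have : (d : ℤ) * e ∣ k * e := by
        rw [← Nat.cast_mul, ← he]; exact h2
      exact (mul_dvd_mul_iff_right (by exact_mod_cast he0.ne')).mp this
    obtain ⟨j, hj⟩ := h3
    have hbez : (d : ℤ) = m * Nat.gcdA m N + N * Nat.gcdB m N := by rw [← hd]; exact Nat.gcd_eq_gcd_ab m N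
    set u := Nat.gcdA m N
    set v := Nat.gcdB m N
    refine ⟨g ^ (j * u), ?_⟩
    have hgN : g ^ (N : ℤ) = 1 := by rw [zpow_natCast]; exact hgcard g
    have hexp : (j * u) * (m : ℤ) = (d : ℤ) * j + (N : ℤ) * (-(j * v)) := by
      linear_combination (-j) * hbez
    calc (g ^ (j * u)) ^ m = g ^ ((j * u) * (m : ℤ)) := by
          rw [← zpow_natCast (g ^ (j * u)) m, ← zpow_mul]
      _ = g ^ ((d : ℤ) * j) * (g ^ (N : ℤ)) ^ (-(j * v)) := by
          rw [hexp, zpow_add, zpow_mul, zpow_mul]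
      _ = g ^ k := by rw [hgN, one_zpow, mul_one, hj]
      _ = t := hk

/-- A unit of `L` is in the image of `K` iff it is killed by `card K - 1`. -/
lemma mem_range_algebraMap_iff_pow {K L : Type*} [Field K] [Fintype K] [Field L] [Fintype L]
    [Algebra K L] (y : Lˣ) :
    (∃ a : K, algebraMap K L a = (y : L)) ↔ y ^ (Fintype.card K - 1) = 1 := by
  have hK1 : 0 < Fintype.card K - 1 := by
    have := Fintype.one_lt_card (α := K)
    omega
  constructor
  · rintro ⟨a, ha⟩
    have ha0 : a ≠ 0 := by
      rintro rfl
      simp only [map_zero] at ha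
      exact y.ne_zero ha.symm
    have := FiniteField.pow_card_sub_one_eq_one a ha0
    ext
    push_cast
    rw [← ha, ← map_pow, this, map_one]
  · intro h
    set f : Kˣ →* Lˣ := Units.map (algebraMap K L : K →+* L) with hf
    have hfinj : Function.Injective f := Units.map_injective (algebraMap K L).injective
    set T : Finset Lˣ := Finset.univ.filter (fun b => b ^ (Fintype.card K - 1) = 1) with hT
    have hTcard : T.card ≤ Fintype.card K - 1 := IsCyclic.card_pow_eq_one_le hK1
    set S : Finset Lˣ := Finset.univ.image f with hS
    have hScard : S.card = Fintype.card K - 1 := by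
      rw [hS, Finset.card_image_of_injective _ hfinj, Finset.card_univ, Fintype.card_units]
    have hST : S ⊆ T := by
      intro b hb
      obtain ⟨a, _, rfl⟩ := Finset.mem_image.mp hb
      have ha : a ^ (Fintype.card K - 1) = 1 := by
        ext
        push_cast
        exact FiniteField.pow_card_sub_one_eq_one (a : K) a.ne_zero
      simp only [hT, Finset.mem_filter, Finset.mem_univ, true_and]
      rw [← map_pow, ha, map_one]
    have hSeqT : S = T := Finset.eq_of_subset_of_card_le hST (by omega)
    have hyT : y ∈ T := by
      simp only [hT, Finset.mem_filter, Finset.mem_univ, true_and]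
      exact h
    rw [← hSeqT] at hyT
    obtain ⟨a, _, ha⟩ := Finset.mem_image.mp hyT
    exact ⟨(a : K), by rw [← ha]; rfl⟩

/-- For `q` a prime power and `t ∈ F_{q⁶}*`, `t` is a `(q²+q+1)`-th power
in `F_{q⁶}` if and only if `t^{q³+1} ∈ F_q`. -/
theorem stmt17 (p n q : ℕ) [Fact p.Prime] (hn : 0 < n) (hq : q = p ^ n)
    (K L : Type*) [Field K] [Fintype K] [Field L] [Fintype L] [Algebra K L]
    (hK : Fintype.card K = q) (hL : Fintype.card L = q ^ 6)
    (t : L) (ht : t ≠ 0) :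
    (∃ s : L, s ^ (q ^ 2 + q + 1) = t) ↔
      ∃ a : K, algebraMap K L a = t ^ (q ^ 3 + 1) := by
  have hp : p.Prime := Fact.out
  have hq2 : 2 ≤ q := by
    rw [hq]
    exact Nat.one_lt_pow hn.ne' hp.one_lt
  set m := q ^ 2 + q + 1 with hm
  have hm0 : 0 < m := by positivity
  have hdiv : m * ((q - 1) * (q ^ 3 + 1)) = q ^ 6 - 1 := by
    obtain ⟨k, rfl⟩ : ∃ k, q = k + 2 := ⟨q - 2, by omega⟩
    have h1 : (k + 2) - 1 = k + 1 := by omega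
    rw [h1]
    have : (k + 2) ^ 6 = (k + 2) ^ 2 * (k + 2) ^ 2 * (k + 2) ^ 2 := by ring
    apply Nat.eq_sub_of_add_eq'
    ring
  have hcardL : Fintype.card Lˣ = q ^ 6 - 1 := by rw [Fintype.card_units, hL]
  have hgcd : Nat.gcd m (Fintype.card Lˣ) = m := by
    rw [hcardL]
    exact Nat.gcd_eq_left ⟨(q - 1) * (q ^ 3 + 1), hdiv.symm⟩
  have hquot : Fintype.card Lˣ / Nat.gcd m (Fintype.card Lˣ) = (q - 1) * (q ^ 3 + 1) := by
    rw [hgcd, hcardL, ← hdiv, Nat.mul_div_cancel_left _ hm0]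
  set tu : Lˣ := Units.mk0 t ht with htu
  have h1 : (∃ s : L, s ^ m = t) ↔ ∃ s : Lˣ, s ^ m = tu := by
    constructor
    · rintro ⟨s, hs⟩
      have hs0 : s ≠ 0 := by
        rintro rfl
        rw [zero_pow hm0.ne'] at hs
        exact ht hs.symm
      refine ⟨Units.mk0 s hs0, ?_⟩
      ext
      push_cast
      exact hs
    · rintro ⟨s, hs⟩
      refine ⟨(s : L), ?_⟩
      have := congrArg (Units.val) hs
      push_cast at this
      exact this
  rw [h1, cyclic_exists_pow_iff m hm0 tu, hquot]
  have h2 : tu ^ ((q - 1) * (q ^ 3 + 1)) = 1 ↔ (tu ^ (q ^ 3 + 1)) ^ (Fintype.card K - 1) = 1 := by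
    rw [← pow_mul, mul_comm (q ^ 3 + 1), hK]
  rw [h2, ← mem_range_algebraMap_iff_pow]
  have h3 : ((tu ^ (q ^ 3 + 1) : Lˣ) : L) = t ^ (q ^ 3 + 1) := by push_cast; rfl
  rw [h3]
end

section
/- Let q = 2^n and N ∈ F_{q³} \ F_q. Then N^{q+1}(N+1)^{q²+q+1} / (N^{q²+q+1} + N + N^q + N^{q²})² ∉ F_q, provided N^{q²+q+1} + N + N^q + N^{q²} ≠ 0. -/
/-- For `q = 2^n` and `N ∈ F_{q³} \ F_q` with
`N^{q²+q+1} + N + N^q + N^{q²} ≠ 0`, the element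
`N^{q+1}(N+1)^{q²+q+1} / (N^{q²+q+1}+N+N^q+N^{q²})²` does not lie in `F_q`. -/
theorem stmt19 (n q : ℕ) (hn : 0 < n) (hq : q = 2 ^ n)
    (K M : Type*) [Field K] [Fintype K] [Field M] [Fintype M] [Algebra K M]
    (hK : Fintype.card K = q) (hM : Fintype.card M = q ^ 3)
    (N : M) (hN : N ∉ Set.range (algebraMap K M))
    (hB : N ^ (q ^ 2 + q + 1) + N + N ^ q + N ^ (q ^ 2) ≠ 0) :
    N ^ (q + 1) * (N + 1) ^ (q ^ 2 + q + 1) /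
        (N ^ (q ^ 2 + q + 1) + N + N ^ q + N ^ (q ^ 2)) ^ 2 ∉
      Set.range (algebraMap K M) := by
  classical
  have hq1 : 1 < q := by rw [hq]; exact Nat.one_lt_two_pow (by omega)
  -- characteristic 2
  have hchar : CharP M 2 := by
    have h2 : Fintype.card M = 2 ^ (3 * n) := by
      rw [hM, hq, ← pow_mul, mul_comm]
    obtain ⟨m, hp, hcard⟩ := FiniteField.card M (ringChar M)
    have hdvd : ringChar M ∣ 2 ^ (3 * n) := by
      rw [← h2, hcard]
      exact dvd_pow_self _ (by exact_mod_cast m.ne_zero)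
    have := (Nat.Prime.dvd_of_dvd_pow hp hdvd)
    have h2' : ringChar M = 2 := (Nat.prime_dvd_prime_iff_eq hp Nat.prime_two).mp this
    rw [← h2']
    exact ringChar.charP M
  have hfrob : ∀ x y : M, (x + y) ^ q = x ^ q + y ^ q := by
    subst hq
    intro x y
    haveI : Fact (Nat.Prime 2) := ⟨Nat.prime_two⟩
    exact add_pow_char_pow x y 2 n
  -- membership characterization
  have hmem_pow : ∀ x : M, x ∈ Set.range (algebraMap K M) → x ^ q = x := by
    rintro x ⟨k, rfl⟩
    rw [← map_pow]
    congr 1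
    rw [← hK]
    exact FiniteField.pow_card k
  have hpow_mem : ∀ x : M, x ^ q = x → x ∈ Set.range (algebraMap K M) := by
    intro x hx
    set p : Polynomial M := Polynomial.X ^ q - Polynomial.X with hp
    have hp0 : p ≠ 0 := FiniteField.X_pow_card_sub_X_ne_zero M hq1
    have hdeg : p.natDegree = q := FiniteField.X_pow_card_sub_X_natDegree_eq M hq1
    set T : Finset M := Finset.univ.image (algebraMap K M) with hT
    have hTsub : T ⊆ p.roots.toFinset := by
      intro y hy
      simp only [hT, Finset.mem_image] at hy
      obtain ⟨k, -, rfl⟩ := hy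
      rw [Multiset.mem_toFinset, Polynomial.mem_roots hp0]
      simp only [hp, Polynomial.IsRoot, Polynomial.eval_sub, Polynomial.eval_pow,
        Polynomial.eval_X]
      rw [hmem_pow _ ⟨k, rfl⟩, sub_self]
    have hcardT : T.card = q := by
      rw [hT, Finset.card_image_of_injective _ (algebraMap K M).injective,
        Finset.card_univ, hK]
    have hle : p.roots.toFinset.card ≤ q := by
      calc p.roots.toFinset.card ≤ Multiset.card p.roots := p.roots.toFinset_card_le
        _ ≤ p.natDegree := p.card_roots'
        _ = q := hdeg
    have heq : T = p.roots.toFinset :=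
      Finset.eq_of_subset_of_card_le hTsub (by omega)
    have hxr : x ∈ p.roots.toFinset := by
      rw [Multiset.mem_toFinset, Polynomial.mem_roots hp0]
      simp only [hp, Polynomial.IsRoot, Polynomial.eval_sub, Polynomial.eval_pow,
        Polynomial.eval_X, hx, sub_self]
    rw [← heq, hT, Finset.mem_image] at hxr
    obtain ⟨k, -, hk⟩ := hxr
    exact ⟨k, hk⟩
  -- basic nonvanishing
  have hN0 : N ≠ 0 := fun h => hN ⟨0, by simp [h]⟩
  have hN1 : N + 1 ≠ 0 := by
    intro h
    exact hN ⟨-1, by rw [map_neg, map_one]; linear_combination -h⟩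
  have hNcube : N ^ q ^ 3 = N := by rw [← hM]; exact FiniteField.pow_card N
  have hNq1cube : (N + 1) ^ q ^ 3 = N + 1 := by rw [← hM]; exact FiniteField.pow_card (N + 1)
  set B : M := N ^ (q ^ 2 + q + 1) + N + N ^ q + N ^ (q ^ 2) with hBdef
  set C : M := (N + 1) ^ (q ^ 2 + q + 1) with hCdef
  have hC0 : C ≠ 0 := pow_ne_zero _ hN1
  have hCq : C ^ q = C := by
    have h1 : (q ^ 2 + q + 1) * q = q ^ 3 + (q ^ 2 + q) := by ring
    rw [hCdef, ← pow_mul, h1, pow_add, hNq1cube,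
      show (N + 1) ^ (q ^ 2 + q + 1) = (N + 1) ^ (q ^ 2 + q) * (N + 1) from pow_succ _ _]
    ring
  have hBq : B ^ q = B := by
    have h1 : (q ^ 2 + q + 1) * q = q ^ 3 + (q ^ 2 + q) := by ring
    have h2 : q ^ 2 * q = q ^ 3 := by ring
    have h3 : q * q = q ^ 2 := by ring
    rw [hBdef, hfrob, hfrob, hfrob, ← pow_mul, ← pow_mul, ← pow_mul, h1, h2, h3,
      pow_add, hNcube,
      show N ^ (q ^ 2 + q + 1) = N ^ (q ^ 2 + q) * N from pow_succ _ _]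
    ring
  rintro ⟨k, hk⟩
  set E : M := N ^ (q + 1) * C / B ^ 2 with hEdef
  have hEq : E ^ q = E := hmem_pow E ⟨k, hk⟩
  have hEq' : N ^ ((q + 1) * q) * C / B ^ 2 = N ^ (q + 1) * C / B ^ 2 := by
    calc N ^ ((q + 1) * q) * C / B ^ 2
        = (N ^ (q + 1)) ^ q * C ^ q / (B ^ 2) ^ q := by
          rw [hCq, ← pow_mul N, ← pow_mul B, mul_comm 2 q, pow_mul B, hBq]
      _ = E ^ q := by rw [hEdef, div_pow, mul_pow]
      _ = E := hEq
  have hB2 : B ^ 2 ≠ 0 := pow_ne_zero _ hB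
  have hmul : N ^ ((q + 1) * q) = N ^ (q + 1) := by
    rw [div_eq_div_iff hB2 hB2] at hEq'
    have h1 := mul_right_cancel₀ hB2 hEq'
    exact mul_right_cancel₀ hC0 h1
  have hNq2 : N ^ q ^ 2 = N := by
    have h1 : (q + 1) * q = q ^ 2 + q := by ring
    rw [h1, pow_add, pow_add, pow_one, mul_comm (N ^ q) N] at hmul
    exact mul_right_cancel₀ (pow_ne_zero _ hN0) hmul
  have hNqq : N ^ q = N := by
    have := congrArg (· ^ q) hNq2
    simp only [← pow_mul] at this
    have h2 : q ^ 2 * q = q ^ 3 := by ring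
    rw [h2, hNcube] at this
    exact this.symm
  exact hN (hpow_mem N hNqq)
end
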